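/- Let K be a weakly compact, convex, non-empty subset of a Banach space E and let (x_α) be a bounded net in E indexed by a directed set. Then the asymptotic center AC(K, (x_α)) = { k ∈ K : limsup_α ‖x_α − k‖ = r(K, (x_α)) } is non-empty, where r(K, (x_α)) = inf{ limsup_α ‖x_α − k‖ : k ∈ K }. -/

import Mathlib

/-!
The function `k ↦ limsup_α ‖x_α - k‖` is convex and 1-Lipschitz, so its sublevel sets are closed
and convex, hence weakly closed by Mazur's theorem. It is thus weakly lower semicontinuous, and
attains its infimum on the weakly compact set `K`.
-/

open Filter

/-- The asymptotic radius `r(K, (x_α))` of a net `x : ι → E` (along a filter `F` on the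
index set) relative to `K`. -/
noncomputable def asympRadius {E ι : Type*} [NormedAddCommGroup E]
    (F : Filter ι) (K : Set E) (x : ι → E) : ℝ :=
  sInf ((fun k => Filter.limsup (fun α => ‖x α - k‖) F) '' K)

/-- The asymptotic center `AC(K, (x_α))` of a net `x : ι → E` relative to `K`. -/
noncomputable def asympCenter {E ι : Type*} [NormedAddCommGroup E]
    (F : Filter ι) (K : Set E) (x : ι → E) : Set E :=
  {k | k ∈ K ∧ Filter.limsup (fun α => ‖x α - k‖) F = asympRadius F K x}

open Set

section WeakTopology

variable {E : Type*} [AddCommGroup E] [Module ℝ E] [TopologicalSpace E]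
  [IsTopologicalAddGroup E] [ContinuousSMul ℝ E] [LocallyConvexSpace ℝ E]

theorem Convex.isClosed_toWeakSpace_image {s : Set E} (hs : Convex ℝ s) (hc : IsClosed s) :
    IsClosed (toWeakSpace ℝ E '' s) := by
  rw [← closure_eq_iff_isClosed, ← hs.toWeakSpace_closure ℝ, hc.closure_eq]

theorem ConvexOn.lowerSemicontinuous_comp_toWeakSpace_symm {f : E → ℝ}
    (hconv : ConvexOn ℝ univ f) (hlsc : LowerSemicontinuous f) :
    LowerSemicontinuous (f ∘ (toWeakSpace ℝ E).symm) := by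
  refine lowerSemicontinuous_iff_isClosed_preimage.2 fun r => ?_
  have hconv_le : Convex ℝ {x | f x ≤ r} := by
    simpa only [mem_univ, true_and] using hconv.convex_le r
  rw [preimage_comp, ← LinearEquiv.image_eq_preimage_symm]
  exact hconv_le.isClosed_toWeakSpace_image (hlsc.isClosed_preimage r)

end WeakTopology

theorem Real.limsup_const_mul_of_nonneg {ι : Type*} {F : Filter ι} [F.NeBot] {u : ι → ℝ}
    {c : ℝ} (hc : 0 ≤ c) (hbdd : IsBoundedUnder (· ≤ ·) F u)
    (hcobdd : IsCoboundedUnder (· ≤ ·) F u) :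
    limsup (fun i => c * u i) F = c * limsup u F :=
  ((monotone_mul_left_of_nonneg hc).map_limsup_of_continuousAt u
    (continuous_const_mul c).continuousAt hbdd hcobdd).symm

noncomputable def asympRadiusAt {E ι : Type*} [NormedAddCommGroup E]
    (F : Filter ι) (x : ι → E) (k : E) : ℝ :=
  limsup (fun α => ‖x α - k‖) F

theorem mem_asympCenter_of_isMinOn {E ι : Type*} [NormedAddCommGroup E] {F : Filter ι}
    {K : Set E} {x : ι → E} {k : E} (hk : k ∈ K) (hmin : IsMinOn (asympRadiusAt F x) K k) :
    k ∈ asympCenter F K x :=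
  ⟨hk, (IsLeast.csInf_eq (s := asympRadiusAt F x '' K)
    ⟨mem_image_of_mem _ hk, forall_mem_image.2 fun _ hk' => hmin hk'⟩).symm⟩

namespace asympRadiusAt

variable {E ι : Type*} [NormedAddCommGroup E] {F : Filter ι} {x : ι → E}

theorem isBoundedUnder_norm_sub (hx : IsBoundedUnder (· ≤ ·) F (‖x ·‖)) (k : E) :
    IsBoundedUnder (· ≤ ·) F (‖x · - k‖) :=
  (isBoundedUnder_le_add hx isBoundedUnder_const).mono_le
    (Eventually.of_forall fun _ => norm_sub_le _ _)

theorem isCoboundedUnder_norm_sub [F.NeBot] (k : E) : IsCoboundedUnder (· ≤ ·) F (‖x · - k‖) :=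
  isCoboundedUnder_le_of_le F fun _ => norm_nonneg _

theorem lipschitzWith_one [F.NeBot] (hx : IsBoundedUnder (· ≤ ·) F (‖x ·‖)) :
    LipschitzWith 1 (asympRadiusAt F x) := by
  refine LipschitzWith.of_le_add fun k k' => ?_
  calc asympRadiusAt F x k ≤ limsup (fun α => ‖x α - k'‖ + dist k k') F :=
        limsup_le_limsup (Eventually.of_forall fun α => by
            simpa only [dist_eq_norm] using dist_triangle_right (x α) k k')
          (isCoboundedUnder_norm_sub k)
          (isBoundedUnder_le_add (isBoundedUnder_norm_sub hx k') isBoundedUnder_const)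
    _ = asympRadiusAt F x k' + dist k k' :=
        limsup_add_const F _ _ (isBoundedUnder_norm_sub hx k') (isCoboundedUnder_norm_sub k')

theorem convexOn [NormedSpace ℝ E] [F.NeBot] (hx : IsBoundedUnder (· ≤ ·) F (‖x ·‖)) :
    ConvexOn ℝ univ (asympRadiusAt F x) := by
  refine ⟨convex_univ, fun k _ k' _ a b ha hb hab => ?_⟩
  have hbdd (c : ℝ) (hc : 0 ≤ c) (k : E) : IsBoundedUnder (· ≤ ·) F (c * ‖x · - k‖) :=
    isBoundedUnder_le_mul_of_nonneg (Frequently.of_forall fun _ => hc) isBoundedUnder_const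
      (Eventually.of_forall fun _ => norm_nonneg _) (isBoundedUnder_norm_sub hx k)
  have hlimsup_mul (c : ℝ) (hc : 0 ≤ c) (k : E) :
      limsup (c * ‖x · - k‖) F = c * asympRadiusAt F x k :=
    Real.limsup_const_mul_of_nonneg hc (isBoundedUnder_norm_sub hx k)
      (isCoboundedUnder_norm_sub k)
  have hpointwise (α : ι) : ‖x α - (a • k + b • k')‖ ≤ a * ‖x α - k‖ + b * ‖x α - k'‖ := by
    simpa only [dist_comm _ (x α), dist_eq_norm, smul_eq_mul]
      using (convexOn_univ_dist (x α)).2 trivial trivial ha hb hab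
  calc asympRadiusAt F x (a • k + b • k')
      ≤ limsup (fun α => a * ‖x α - k‖ + b * ‖x α - k'‖) F :=
        limsup_le_limsup (Eventually.of_forall hpointwise) (isCoboundedUnder_norm_sub _)
          (isBoundedUnder_le_add (hbdd a ha k) (hbdd b hb k'))
    _ ≤ limsup (a * ‖x · - k‖) F + limsup (b * ‖x · - k'‖) F :=
        limsup_add_le (isBoundedUnder_of ⟨0, fun _ => by positivity⟩) (hbdd a ha k)
          (isCoboundedUnder_le_of_le F fun _ => by positivity) (hbdd b hb k')
    _ = a • asympRadiusAt F x k + b • asympRadiusAt F x k' := by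
        rw [hlimsup_mul a ha, hlimsup_mul b hb, smul_eq_mul, smul_eq_mul]

end asympRadiusAt

theorem asympCenter_nonempty_of_weaklyCompact_general
    {E : Type*} [NormedAddCommGroup E] [NormedSpace ℝ E]
    {K : Set E} (hKw : IsCompact (toWeakSpace ℝ E '' K))
    (hKne : K.Nonempty)
    {ι : Type*} [Preorder ι] [Nonempty ι] [IsDirected ι (· ≤ ·)]
    (x : ι → E) (hx : Bornology.IsBounded (Set.range x)) :
    (asympCenter (atTop : Filter ι) K x).Nonempty := by
  have hxF : IsBoundedUnder (· ≤ ·) atTop (‖x ·‖) := by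
    obtain ⟨C, hC⟩ := isBounded_iff_forall_norm_le.1 hx
    exact isBoundedUnder_of ⟨C, fun α => hC _ (mem_range_self α)⟩
  have hlsc := (asympRadiusAt.convexOn hxF).lowerSemicontinuous_comp_toWeakSpace_symm
    (asympRadiusAt.lipschitzWith_one hxF).continuous.lowerSemicontinuous
  obtain ⟨_, ⟨k, hk, rfl⟩, hmin⟩ := (hlsc.lowerSemicontinuousOn _).exists_isMinOn
    (hKne.image _) hKw
  refine ⟨k, mem_asympCenter_of_isMinOn hk fun k' hk' => ?_⟩
  simpa using hmin (mem_image_of_mem _ hk')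

/-- Let `K` be a weakly compact convex non-empty subset of a Banach space `E`, and let
`(x_α)` be a bounded net in `E` indexed by a directed set.  Then the asymptotic center
`AC(K, (x_α))` is non-empty. -/
theorem asympCenter_nonempty_of_weaklyCompact
    {E : Type*} [NormedAddCommGroup E] [NormedSpace ℝ E] [CompleteSpace E]
    {K : Set E} (hKw : IsCompact (toWeakSpace ℝ E '' K))
    (hKconv : Convex ℝ K) (hKne : K.Nonempty)
    {ι : Type*} [Preorder ι] [Nonempty ι] [IsDirected ι (· ≤ ·)]
    (x : ι → E) (hx : Bornology.IsBounded (Set.range x)) :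
    (asympCenter (atTop : Filter ι) K x).Nonempty :=
  asympCenter_nonempty_of_weaklyCompact_general hKw hKne x hx
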